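/- arXiv:1504.02670 — 2 statements merged into one kernel-verified Lean document; each statement's English description precedes it below -/
import Mathlib

section
/- Let γ be a closed path of length p at a vertex u in a countable oriented graph, with first-return decomposition γ = γ_1 * ... * γ_j. Fix M ≥ 1 and let γ⁻ (resp. γ⁺) be the concatenation of the first returns γ_i of length ≤ M (resp. > M), and let i(γ) ⊂ {1,...,p} record the starting times of the long first returns. Then the map γ ↦ (γ⁻, γ⁺, i(γ)) is injective on closed paths of length p at u, the number of long first returns is at most p/M, and the length of γ⁻ is at least r(γ) − #i(γ), where r(γ) is the number of visits of γ to u. -/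
open Filter Topology

/-- `l` is (the list of vertices of) a closed path of length `p` at `u` in the oriented
graph `G`. -/
def IsClosedPathList {V : Type*} (G : V → V → Prop) (u : V) (p : ℕ) (l : List V) : Prop :=
  l.length = p + 1 ∧ l.head? = some u ∧ l.getLast? = some u ∧ l.Chain' G

/-- `l` is a first return at `u` of length `p`. -/
def IsFirstReturn {V : Type*} (G : V → V → Prop) (u : V) (p : ℕ) (l : List V) : Prop :=
  IsClosedPathList G u p l ∧ ∀ i, 0 < i → i < p → l[i]? ≠ some u

/-- Concatenation of a list of closed paths at a common base point. -/
def concatPaths {V : Type*} (ls : List (List V)) : List V :=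
  ls.foldr (fun a b => a ++ b.tail) []

/-!
A first return at `u` is a path `u :: (w ++ [u])` with `u ∉ w`, so the tail of a concatenation of
first returns reads `w₁ ++ u :: w₂ ++ u :: ⋯ ++ wⱼ ++ [u]`. Since the `wᵢ` avoid `u`, every closed
path of positive length has exactly one first-return decomposition, and it visits `u` exactly `j`
times. The same uniqueness recovers the short and the long first returns from `γ⁻` and `γ⁺`, and the
starting times `i(γ)` say how to interleave them. The lengths of the first returns add up to `p`;
a long one has length more than `M` and a short one length at least `1`, which gives both bounds.
-/

namespace List

variable {α : Type*}

theorem natCard_getElem?_eq_count_take [DecidableEq α] (a : α) :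
    ∀ (l : List α) (n : ℕ), Nat.card {k : Fin n // l[(k : ℕ)]? = some a} = (l.take n).count a
  | [], n => by simp
  | _, 0 => by simp
  | b :: t, n + 1 => by
    rw [Nat.card_eq_fintype_card, Fintype.card_subtype, Fin.card_filter_univ_succ',
      ← Fintype.card_subtype, ← Nat.card_eq_fintype_card]
    simp only [Fin.val_succ, getElem?_cons_succ, natCard_getElem?_eq_count_take a t n]
    simp [count_cons, add_comm]

theorem eq_of_append_cons_eq_of_notMem {w₁ w₂ x₁ x₂ : List α} {a : α} (h₁ : a ∉ w₁)
    (h₂ : a ∉ w₂) (h : w₁ ++ a :: x₁ = w₂ ++ a :: x₂) : w₁ = w₂ ∧ x₁ = x₂ := by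
  rw [append_eq_append_iff] at h
  rcases h with ⟨c, rfl, h⟩ | ⟨c, rfl, h⟩ <;> cases c <;> simp_all

theorem length_filter_mul_le_sum (P : α → Prop) [DecidablePred P] {f : α → ℕ} {m : ℕ}
    {l : List α} (h : ∀ a ∈ l, P a → m ≤ f a) : (l.filter (P ·)).length * m ≤ (l.map f).sum :=
  calc (l.filter (P ·)).length * m = ((l.filter (P ·)).map f).length • m := by simp
    _ ≤ ((l.filter (P ·)).map f).sum :=
      card_nsmul_le_sum _ _ fun x hx => by
        obtain ⟨a, ha, rfl⟩ := mem_map.1 hx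
        exact h a (mem_of_mem_filter ha) (by simpa using of_mem_filter ha)
    _ ≤ (l.map f).sum := ((filter_sublist (l := l)).map f).sum_le_sum fun _ _ => Nat.zero_le _

theorem length_le_length_filter_add_sum (P : α → Prop) [DecidablePred P] {f : α → ℕ}
    {l : List α} (h : ∀ a ∈ l, 1 ≤ f a) :
    l.length ≤ (l.filter (¬ P ·)).length + ((l.filter (P ·)).map f).sum := by
  have hP : (l.filter (P ·)).length ≤ ((l.filter (P ·)).map f).sum := by
    simpa using length_le_sum_of_one_le ((l.filter (P ·)).map f) fun x hx => by
      obtain ⟨a, ha, rfl⟩ := mem_map.1 hx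
      exact h a (mem_of_mem_filter ha)
  have := length_eq_length_filter_add (l := l) (P ·)
  simp only [Bool.not, decide_not] at this ⊢
  omega

def markedOffsets (P : α → Prop) (w : α → ℕ) (l : List α) : Set ℕ :=
  {n | ∃ (k : ℕ) (h : k < l.length), P (l.get ⟨k, h⟩) ∧ n = ((l.take k).map w).sum}

section markedOffsets

variable {P : α → Prop} {w : α → ℕ} {a : α} {t : List α}

theorem zero_mem_markedOffsets_cons (hw : 0 < w a) : 0 ∈ markedOffsets P w (a :: t) ↔ P a := by
  constructor
  · rintro ⟨_ | k, hk, hP, h0⟩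
    · exact hP
    · simp at h0; omega
  · exact fun hP => ⟨0, by simp, hP, rfl⟩

theorem add_mem_markedOffsets_cons (hw : 0 < w a) (n : ℕ) :
    n + w a ∈ markedOffsets P w (a :: t) ↔ n ∈ markedOffsets P w t := by
  constructor
  · rintro ⟨_ | k, hk, hP, hn⟩
    · simp at hn; omega
    · simp only [take_succ_cons, map_cons, sum_cons] at hn
      exact ⟨k, by simpa using hk, hP, by omega⟩
  · rintro ⟨k, hk, hP, rfl⟩
    exact ⟨k + 1, by simpa using hk, hP, by simp [add_comm]⟩

theorem eq_of_filter_eq_of_markedOffsets_eq [DecidablePred P] :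
    ∀ {l₁ l₂ : List α}, (∀ a ∈ l₁, 0 < w a) → (∀ a ∈ l₂, 0 < w a) →
      l₁.filter (P ·) = l₂.filter (P ·) → l₁.filter (¬ P ·) = l₂.filter (¬ P ·) →
      markedOffsets P w l₁ = markedOffsets P w l₂ → l₁ = l₂
  | [], [], _, _, _, _, _ => rfl
  | [], b :: _, _, _, hP, hnP, _ | b :: _, [], _, _, hP, hnP, _ => by
    by_cases h : P b <;> simp [h] at hP hnP
  | a :: t₁, b :: t₂, hw₁, hw₂, hP, hnP, hoff => by
    have ha : 0 < w a := hw₁ a mem_cons_self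
    have hPab : P a ↔ P b := by
      rw [← zero_mem_markedOffsets_cons (P := P) (t := t₁) ha,
        ← zero_mem_markedOffsets_cons (P := P) (t := t₂) (hw₂ b mem_cons_self), hoff]
    have hab : a = b ∧ t₁.filter (P ·) = t₂.filter (P ·) ∧
        t₁.filter (¬ P ·) = t₂.filter (¬ P ·) := by
      by_cases h : P a <;> simp_all [filter_cons]
    obtain ⟨rfl, hP', hnP'⟩ := hab
    have hoff' : markedOffsets P w t₁ = markedOffsets P w t₂ := by
      ext n
      rw [← add_mem_markedOffsets_cons (t := t₁) ha, ← add_mem_markedOffsets_cons (t := t₂) ha,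
        hoff]
    rw [eq_of_filter_eq_of_markedOffsets_eq (fun x hx => hw₁ x (mem_cons_of_mem a hx))
      (fun x hx => hw₂ x (mem_cons_of_mem a hx)) hP' hnP' hoff']

end markedOffsets

end List

section FirstReturn

variable {V : Type*} {G : V → V → Prop} {u : V}

def IsFirstReturnPath (G : V → V → Prop) (u : V) (l : List V) : Prop :=
  ∃ q, 0 < q ∧ IsFirstReturn G u q l

theorem isFirstReturnPath_iff {l : List V} :
    IsFirstReturnPath G u l ↔ (∃ w, u ∉ w ∧ l = u :: (w ++ [u])) ∧ l.IsChain G := by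
  constructor
  · rintro ⟨q, hq, ⟨hlen, hhead, hlast, hchain⟩, hint⟩
    refine ⟨?_, hchain⟩
    obtain ⟨b, rest, rfl⟩ := List.exists_cons_of_ne_nil (l := l) (by rintro rfl; simp at hlen)
    obtain rfl : b = u := by simpa using hhead
    have hrest : rest ≠ [] := by rintro rfl; simp at hlen; omega
    refine ⟨rest.dropLast, fun hu => ?_, ?_⟩
    · obtain ⟨i, hi, hiu⟩ := List.getElem_of_mem hu
      simp only [List.length_dropLast, List.length_cons] at hi hlen
      exact hint (i + 1) (by omega) (by omega) (by simp [← hiu])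
    · have hb : rest.getLast hrest = b := by
        simpa [List.getLast?_cons, List.getLast?_eq_some_getLast hrest] using hlast
      rw [← hb, List.dropLast_append_getLast]
  · rintro ⟨⟨w, hw, rfl⟩, hchain⟩
    refine ⟨w.length + 1, by omega,
      ⟨by simp, rfl, List.getLast?_eq_some_iff.2 ⟨u :: w, rfl⟩, hchain⟩, fun i hi hiq => ?_⟩
    obtain ⟨j, rfl⟩ := Nat.exists_eq_add_of_lt hi
    simp only [zero_add, List.getElem?_cons_succ]
    rw [List.getElem?_append_left (by omega)]
    intro h
    exact hw (List.mem_of_getElem? h)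

theorem IsFirstReturnPath.length_sub_one_pos {l : List V} (h : IsFirstReturnPath G u l) :
    0 < l.length - 1 := by
  obtain ⟨⟨w, -, rfl⟩, -⟩ := isFirstReturnPath_iff.1 h
  simp

theorem tail_concatPaths_cons (w : List V) (ls : List (List V)) :
    (concatPaths ((u :: (w ++ [u])) :: ls)).tail = w ++ u :: (concatPaths ls).tail := by
  simp [concatPaths]

theorem eq_of_tail_concatPaths_eq :
    ∀ {ls₁ ls₂ : List (List V)}, (∀ a ∈ ls₁, IsFirstReturnPath G u a) →
      (∀ a ∈ ls₂, IsFirstReturnPath G u a) →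
      (concatPaths ls₁).tail = (concatPaths ls₂).tail → ls₁ = ls₂
  | [], [], _, _, _ => rfl
  | [], a :: _, _, h₂, h | a :: _, [], h₂, _, h => by
    obtain ⟨⟨w, -, rfl⟩, -⟩ := isFirstReturnPath_iff.1 (h₂ a List.mem_cons_self)
    simp [concatPaths] at h
  | a₁ :: t₁, a₂ :: t₂, h₁, h₂, h => by
    obtain ⟨⟨w₁, hw₁, rfl⟩, -⟩ := isFirstReturnPath_iff.1 (h₁ a₁ List.mem_cons_self)
    obtain ⟨⟨w₂, hw₂, rfl⟩, -⟩ := isFirstReturnPath_iff.1 (h₂ a₂ List.mem_cons_self)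
    rw [tail_concatPaths_cons, tail_concatPaths_cons] at h
    obtain ⟨rfl, ht⟩ := List.eq_of_append_cons_eq_of_notMem hw₁ hw₂ h
    rw [eq_of_tail_concatPaths_eq (fun a ha => h₁ a (List.mem_cons_of_mem _ ha))
      (fun a ha => h₂ a (List.mem_cons_of_mem _ ha)) ht]

theorem eq_of_concatPaths_eq {ls₁ ls₂ : List (List V)} (h₁ : ∀ a ∈ ls₁, IsFirstReturnPath G u a)
    (h₂ : ∀ a ∈ ls₂, IsFirstReturnPath G u a) (h : concatPaths ls₁ = concatPaths ls₂) :
    ls₁ = ls₂ :=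
  eq_of_tail_concatPaths_eq h₁ h₂ (congrArg List.tail h)

theorem length_tail_concatPaths :
    ∀ {ls : List (List V)}, (∀ a ∈ ls, IsFirstReturnPath G u a) →
      (concatPaths ls).tail.length = (ls.map (·.length - 1)).sum
  | [], _ => rfl
  | a :: t, h => by
    obtain ⟨⟨w, -, rfl⟩, -⟩ := isFirstReturnPath_iff.1 (h a List.mem_cons_self)
    rw [tail_concatPaths_cons, List.length_append, List.length_cons,
      length_tail_concatPaths fun a ha => h a (List.mem_cons_of_mem _ ha)]
    simp; omega

theorem count_tail_concatPaths [DecidableEq V] :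
    ∀ {ls : List (List V)}, (∀ a ∈ ls, IsFirstReturnPath G u a) →
      (concatPaths ls).tail.count u = ls.length
  | [], _ => rfl
  | a :: t, h => by
    obtain ⟨⟨w, hw, rfl⟩, -⟩ := isFirstReturnPath_iff.1 (h a List.mem_cons_self)
    rw [tail_concatPaths_cons, List.count_append, List.count_cons_self,
      List.count_eq_zero.2 hw, count_tail_concatPaths fun a ha => h a (List.mem_cons_of_mem _ ha)]
    simp

theorem IsClosedPathList.natCard_visits [DecidableEq V] {p : ℕ} {l : List V}
    (h : IsClosedPathList G u p l) :
    Nat.card {k : Fin p // l[(k : ℕ)]? = some u} = l.tail.count u := by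
  obtain ⟨hlen, hhead, hlast, -⟩ := h
  have hne : l ≠ [] := by rintro rfl; simp at hlen
  have hu : l.getLast hne = u := by simpa [List.getLast?_eq_some_getLast hne] using hlast
  have htake : l.take p ++ [u] = l := by
    have : l.take p = l.dropLast := by rw [List.dropLast_eq_take, hlen, Nat.add_sub_cancel]
    rw [this, ← hu, List.dropLast_append_getLast]
  obtain ⟨b, t, rfl⟩ := List.exists_cons_of_ne_nil hne
  obtain rfl : b = u := by simpa using hhead
  have := congrArg (List.count b) htake
  rw [List.natCard_getElem?_eq_count_take]
  simp only [List.count_append, List.count_cons_self] at this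
  simpa [add_comm] using this

theorem IsClosedPathList.exists_decomposition {p : ℕ} {l : List V} (hp : 0 < p)
    (h : IsClosedPathList G u p l) :
    ∃ ls : List (List V), (∀ a ∈ ls, IsFirstReturnPath G u a) ∧ l = concatPaths ls := by
  classical
  induction p using Nat.strong_induction_on generalizing l with
  | _ p ih =>
    obtain ⟨hlen, hhead, hlast, hchain⟩ := h
    obtain ⟨b, rest, rfl⟩ := List.exists_cons_of_ne_nil (l := l) (by rintro rfl; simp at hlen)
    obtain rfl : b = u := by simpa using hhead
    have hrest : rest ≠ [] := by rintro rfl; simp at hlen; omega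
    have hmem : b ∈ rest := List.mem_of_getLast? <| by
      simpa [List.getLast?_cons, List.getLast?_eq_some_getLast hrest] using hlast
    obtain ⟨w, rest', hw, rfl, -⟩ := List.exists_erase_eq hmem
    have hprefix : (b :: (w ++ [b])).IsChain G :=
      (show b :: (w ++ b :: rest') = (b :: (w ++ [b])) ++ rest' by simp) ▸ hchain |>.left_of_append
    have hsuffix : (b :: rest').IsChain G :=
      (show b :: (w ++ b :: rest') = (b :: w) ++ (b :: rest') by simp) ▸ hchain |>.right_of_append
    have hfirst : IsFirstReturnPath G b (b :: (w ++ [b])) :=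
      isFirstReturnPath_iff.2 ⟨⟨w, hw, rfl⟩, hprefix⟩
    rcases eq_or_ne rest' [] with rfl | hne
    · exact ⟨[b :: (w ++ [b])], by simpa using hfirst, by simp [concatPaths]⟩
    have hclosed : IsClosedPathList G b rest'.length (b :: rest') :=
      ⟨rfl, rfl, by simpa [List.getLast?_cons, List.getLast?_eq_some_getLast hne] using hlast,
        hsuffix⟩
    obtain ⟨ls, hls, hrest'⟩ :=
      ih rest'.length (by simp at hlen; omega) (List.length_pos_iff.2 hne) hclosed
    refine ⟨(b :: (w ++ [b])) :: ls, by simpa [hfirst] using hls, ?_⟩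
    change _ = _ ++ (concatPaths ls).tail
    rw [← hrest']
    simp

end FirstReturn

section Encoding

variable {V : Type*} {G : V → V → Prop} {u : V}

def firstReturnEncoding (M : ℕ) (ls : List (List V)) : List V × List V × Set ℕ :=
  (concatPaths (ls.filter fun l => l.length ≤ M + 1),
    concatPaths (ls.filter fun l => ¬ l.length ≤ M + 1),
    List.markedOffsets (fun l => M + 1 < l.length) (fun l => l.length - 1) ls)

theorem eq_of_firstReturnEncoding_eq {M : ℕ} {ls₁ ls₂ : List (List V)}
    (h₁ : ∀ a ∈ ls₁, IsFirstReturnPath G u a) (h₂ : ∀ a ∈ ls₂, IsFirstReturnPath G u a)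
    (h : firstReturnEncoding M ls₁ = firstReturnEncoding M ls₂) : ls₁ = ls₂ := by
  simp only [firstReturnEncoding, Prod.mk.injEq] at h
  obtain ⟨hshort, hlong, hoff⟩ := h
  have hfilter {ls : List (List V)} (hls : ∀ a ∈ ls, IsFirstReturnPath G u a) (p : List V → Bool) :
      ∀ a ∈ ls.filter p, IsFirstReturnPath G u a := fun a ha => hls a (List.mem_of_mem_filter ha)
  refine List.eq_of_filter_eq_of_markedOffsets_eq
    (fun a ha => (h₁ a ha).length_sub_one_pos) (fun a ha => (h₂ a ha).length_sub_one_pos)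
    ?_ ?_ hoff
  · simpa only [not_le] using eq_of_concatPaths_eq (hfilter h₁ _) (hfilter h₂ _) hlong
  · simpa only [not_lt] using eq_of_concatPaths_eq (hfilter h₁ _) (hfilter h₂ _) hshort

end Encoding

theorem jumps_stmt10_general {V : Type*} (G : V → V → Prop) (u : V) (p M : ℕ)
    (hM : 1 ≤ M) (hp : 0 < p) :
    ∃ Φ : {l : List V // IsClosedPathList G u p l} → List V × List V × Set ℕ,
      Function.Injective Φ ∧
      ∀ (γ : {l : List V // IsClosedPathList G u p l}) (ls : List (List V)),
        (∀ l ∈ ls, ∃ q : ℕ, 0 < q ∧ IsFirstReturn G u q l) → γ.val = concatPaths ls →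
        Φ γ = (concatPaths (ls.filter fun l => l.length ≤ M + 1),
               concatPaths (ls.filter fun l => ¬ l.length ≤ M + 1),
               {n : ℕ | ∃ (k : ℕ) (h : k < ls.length), M + 1 < (ls.get ⟨k, h⟩).length ∧
                 n = ((ls.take k).map fun l => l.length - 1).sum}) ∧
        ((ls.filter fun l => ¬ l.length ≤ M + 1).length : ℝ) ≤ (p : ℝ) / M ∧
        (Nat.card {k : Fin p // γ.val[(k : ℕ)]? = some u} : ℤ) -
            ((ls.filter fun l => ¬ l.length ≤ M + 1).length : ℤ) ≤
          Int.ofNat (((ls.filter fun l => l.length ≤ M + 1).map fun l => l.length - 1).sum) := by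
  classical
  choose dec hdec hγ using fun γ : {l : List V // IsClosedPathList G u p l} =>
    γ.2.exists_decomposition hp
  refine ⟨fun γ => firstReturnEncoding M (dec γ), fun γ₁ γ₂ h => ?_, fun γ ls hls hγls => ?_⟩
  · exact Subtype.ext <| by rw [hγ γ₁, hγ γ₂, eq_of_firstReturnEncoding_eq (hdec γ₁) (hdec γ₂) h]
  have hfirst : ∀ a ∈ ls, IsFirstReturnPath G u a := hls
  have hdec_eq : dec γ = ls := eq_of_concatPaths_eq (hdec γ) hfirst ((hγ γ).symm.trans hγls)
  have hsum : (ls.map (·.length - 1)).sum = p := by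
    rw [← length_tail_concatPaths hfirst, ← hγls, List.length_tail, γ.2.1, Nat.add_sub_cancel]
  have hvisits : Nat.card {k : Fin p // γ.val[(k : ℕ)]? = some u} = ls.length := by
    rw [γ.2.natCard_visits, hγls, count_tail_concatPaths hfirst]
  refine ⟨congrArg (firstReturnEncoding M) hdec_eq, ?_, ?_⟩
  · rw [le_div_iff₀ (by exact_mod_cast hM)]
    exact_mod_cast (List.length_filter_mul_le_sum _ fun a _ ha => by omega).trans hsum.le
  · have := List.length_le_length_filter_add_sum (fun l : List V => l.length ≤ M + 1)
      fun a ha => (hfirst a ha).length_sub_one_pos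
    simp only [hvisits, Int.ofNat_eq_natCast]
    omega

/-- Injectivity of the encoding `γ ↦ (γ⁻, γ⁺, i(γ))` of a closed path at `u` by the
concatenation `γ⁻` of its first returns of length `≤ M`, the concatenation `γ⁺` of its
first returns of length `> M`, and the set `i(γ)` of starting times of the long first
returns; moreover there are at most `p/M` long first returns, and the length of `γ⁻` is at
least `r(γ) − #i(γ)` where `r(γ)` is the number of visits of `γ` to `u`. -/
theorem jumps_stmt10 {V : Type*} [Countable V] (G : V → V → Prop) (u : V) (p M : ℕ)
    (hM : 1 ≤ M) (hp : 0 < p) :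
    ∃ Φ : {l : List V // IsClosedPathList G u p l} → List V × List V × Set ℕ,
      Function.Injective Φ ∧
      ∀ (γ : {l : List V // IsClosedPathList G u p l}) (ls : List (List V)),
        (∀ l ∈ ls, ∃ q : ℕ, 0 < q ∧ IsFirstReturn G u q l) → γ.val = concatPaths ls →
        Φ γ = (concatPaths (ls.filter fun l => l.length ≤ M + 1),
               concatPaths (ls.filter fun l => ¬ l.length ≤ M + 1),
               {n : ℕ | ∃ (k : ℕ) (h : k < ls.length), M + 1 < (ls.get ⟨k, h⟩).length ∧
                 n = ((ls.take k).map fun l => l.length - 1).sum}) ∧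
        ((ls.filter fun l => ¬ l.length ≤ M + 1).length : ℝ) ≤ (p : ℝ) / M ∧
        (Nat.card {k : Fin p // γ.val[(k : ℕ)]? = some u} : ℤ) -
            ((ls.filter fun l => ¬ l.length ≤ M + 1).length : ℤ) ≤
          Int.ofNat (((ls.filter fun l => l.length ≤ M + 1).map fun l => l.length - 1).sum) :=
  jumps_stmt10_general G u p M hM hp
end

section
/- Let (f_n) be a sequence of C^1 maps of [0,1] converging in the C^1 topology to f, and for each n let P_n be a natural partition of f_n. Then for every positive integer m, sup_n #P_n(m) < ∞, where P_n(m) is the set of elements of P_n on which |f_n'| attains the value 1/m. -/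
open Filter Topology

/-- `P` is a natural partition of the `C^1` interval map `f` : a countable collection of
pairwise disjoint critical monotone branches (open intervals of `[0,1]` with endpoints in
`{f' = 0} ∪ {0,1}` on which `f` is monotone) whose union covers `{f' ≠ 0}`. -/
structure IsNaturalPartition (f : ℝ → ℝ) (P : Set (Set ℝ)) : Prop where
  countable : P.Countable
  branch : ∀ I ∈ P, ∃ a b : ℝ, a < b ∧ I = Set.Ioo a b ∧ Set.Ioo a b ⊆ Set.Icc 0 1 ∧
    (deriv f a = 0 ∨ a = 0 ∨ a = 1) ∧ (deriv f b = 0 ∨ b = 0 ∨ b = 1) ∧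
    (MonotoneOn f (Set.Ioo a b) ∨ AntitoneOn f (Set.Ioo a b))
  disjoint : P.PairwiseDisjoint id
  covers : {x ∈ Set.Ioo (0 : ℝ) 1 | deriv f x ≠ 0} ⊆ ⋃₀ P

/-- `P(m)` : the set of elements of the natural partition `P` on which `|f'|` attains `1/m`. -/
def partAttains (f : ℝ → ℝ) (P : Set (Set ℝ)) (m : ℕ) : Set (Set ℝ) :=
  {I ∈ P | ∃ x ∈ I, 1 / (m : ℝ) ≤ |deriv f x|}

/-!
The derivatives `fₙ'` converge uniformly on the compact interval `[0,1]`, so they are uniformly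
equicontinuous there: some `δ > 0` makes `|x - y| < δ` force `|fₙ'(x) - fₙ'(y)| < 1/m` for
every `n`. A branch in `Pₙ(m)` contains a point where `|fₙ'| ≥ 1/m`, and each of its endpoints
is a zero of `fₙ'` (hence at distance at least `δ` from that point) or an endpoint of `[0,1]`.
So every branch in `Pₙ(m)` has length at least `min δ 1`, and disjointness in `[0,1]` leaves
room for at most `1 / min δ 1` of them.
-/

open Set MeasureTheory

theorem TendstoUniformlyOn.uniformEquicontinuousOn {α β : Type*} [UniformSpace α]
    [UniformSpace β] {F : ℕ → β → α} {f : β → α} {S : Set β} (hS : IsCompact S)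
    (hF : ∀ n, ContinuousOn (F n) S) (h : TendstoUniformlyOn F f atTop S) :
    UniformEquicontinuousOn F S := by
  intro U hU
  obtain ⟨V, hV, hVsymm, hVU⟩ := comp_comp_symm_mem_uniformity_sets hU
  obtain ⟨N, hN⟩ := eventually_atTop.1 (h V hV)
  have hf : UniformContinuousOn f S :=
    hS.uniformContinuousOn_of_continuous (h.continuousOn (Frequently.of_forall hF))
  have hfin : UniformEquicontinuousOn (fun n : Fin N => F n) S :=
    uniformEquicontinuousOn_finite.2 fun n => hS.uniformContinuousOn_of_continuous (hF n)
  filter_upwards [hf hV, hfin U hU, mem_inf_of_right (mem_principal_self _)]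
  rintro ⟨x, y⟩ hfxy hFxy ⟨hx, hy⟩ n
  by_cases hn : n < N
  · exact hFxy ⟨n, hn⟩
  · have hn : N ≤ n := not_lt.1 hn
    exact hVU <| SetRel.prodMk_mem_comp
      (SetRel.prodMk_mem_comp (SetRel.symm V (hN n hn x hx)) hfxy) (hN n hn y hy)

theorem UniformEquicontinuousOn.exists_dist_lt {ι α β : Type*} [PseudoMetricSpace α]
    [PseudoMetricSpace β] {F : ι → β → α} {S : Set β} (h : UniformEquicontinuousOn F S)
    {ε : ℝ} (hε : 0 < ε) :
    ∃ δ > 0, ∀ i, ∀ x ∈ S, ∀ y ∈ S, dist x y < δ → dist (F i x) (F i y) < ε := by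
  obtain ⟨δ, hδ, hF⟩ := (Metric.uniformity_basis_dist.inf_principal (S ×ˢ S)).eventually_iff.1
    (h _ (Metric.dist_mem_uniformity hε))
  exact ⟨δ, hδ, fun i x hx y hy hxy => hF (x := (x, y)) ⟨hxy, hx, hy⟩ i⟩

theorem Set.finite_and_natCard_le_of_forall_finset_card_le {α : Type*} {Q : Set α} {C : ℕ}
    (h : ∀ t : Finset α, ↑t ⊆ Q → t.card ≤ C) : Q.Finite ∧ Nat.card Q ≤ C := by
  have hQ : Q.Finite := by
    by_contra hinf
    obtain ⟨t, htQ, htC⟩ := Set.Infinite.exists_subset_card_eq hinf (C + 1)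
    have := h t htQ
    omega
  refine ⟨hQ, ?_⟩
  rw [Nat.card_coe_set_eq, Set.ncard_eq_toFinset_card Q hQ]
  exact h _ (by simp)

theorem Finset.card_mul_le_one_of_pairwiseDisjoint_Ioo {t : Finset (Set ℝ)}
    (ht : (t : Set (Set ℝ)).PairwiseDisjoint id) {δ : ℝ}
    (hI : ∀ I ∈ t, ∃ a b, I = Set.Ioo a b ∧ Set.Ioo a b ⊆ Set.Icc 0 1 ∧ δ ≤ b - a) :
    t.card * δ ≤ 1 := by
  calc t.card * δ = t.card • δ := by rw [nsmul_eq_mul]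
    _ ≤ ∑ I ∈ t, volume.real I := by
      refine Finset.card_nsmul_le_sum _ _ _ fun I hIt => ?_
      obtain ⟨a, b, rfl, -, hab⟩ := hI I hIt
      rw [Real.volume_real_Ioo]
      exact hab.trans (le_max_left _ _)
    _ = volume.real (⋃ I ∈ t, I) :=
      (measureReal_biUnion_finset ht
        (fun I hIt => by obtain ⟨a, b, rfl, -⟩ := hI I hIt; exact measurableSet_Ioo)
        (fun I hIt => by obtain ⟨a, b, rfl, -⟩ := hI I hIt; exact measure_Ioo_lt_top.ne)).symm
    _ ≤ volume.real (Set.Icc (0 : ℝ) 1) :=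
      measureReal_mono
        (iUnion₂_subset fun I hIt => by obtain ⟨a, b, rfl, h, -⟩ := hI I hIt; exact h)
        measure_Icc_lt_top.ne
    _ = 1 := by simp

theorem Set.finite_and_natCard_le_of_pairwiseDisjoint_Ioo {Q : Set (Set ℝ)}
    (hQ : Q.PairwiseDisjoint id) {δ : ℝ} (hδ : 0 < δ)
    (hI : ∀ I ∈ Q, ∃ a b, I = Ioo a b ∧ Ioo a b ⊆ Icc 0 1 ∧ δ ≤ b - a) :
    Q.Finite ∧ Nat.card Q ≤ ⌊1 / δ⌋₊ :=
  Set.finite_and_natCard_le_of_forall_finset_card_le fun t htQ => Nat.le_floor <| by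
    rw [le_div_iff₀ hδ]
    exact Finset.card_mul_le_one_of_pairwiseDisjoint_Ioo (hQ.subset htQ) fun I hIt => hI I (htQ hIt)

theorem IsNaturalPartition.exists_Ioo_of_mem_partAttains {g : ℝ → ℝ} {P : Set (Set ℝ)}
    {m : ℕ} {δ : ℝ} (hP : IsNaturalPartition g P)
    (hδ : ∀ x ∈ Icc (0 : ℝ) 1, ∀ y ∈ Icc (0 : ℝ) 1, dist x y < δ →
      dist (deriv g x) (deriv g y) < 1 / m)
    {I : Set ℝ} (hI : I ∈ partAttains g P m) :
    ∃ a b, I = Ioo a b ∧ Ioo a b ⊆ Icc 0 1 ∧ min δ 1 ≤ b - a := by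
  obtain ⟨hIP, x, hxI, hx⟩ := hI
  obtain ⟨a, b, hab, rfl, hsub, ha, hb, -⟩ := hP.branch _ hIP
  obtain ⟨ha0, hb1⟩ :=
    (Icc_subset_Icc_iff hab.le).1 (closure_Ioo hab.ne ▸ closure_minimal hsub isClosed_Icc)
  have hx01 : x ∈ Icc (0 : ℝ) 1 := hsub hxI
  have far_of_crit : ∀ y ∈ Icc (0 : ℝ) 1, deriv g y = 0 → δ ≤ |x - y| := fun y hy hy0 => by
    by_contra! hxy
    have := hδ x hx01 y hy hxy
    rw [dist_eq_norm, hy0, sub_zero, Real.norm_eq_abs] at this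
    linarith
  refine ⟨a, b, rfl, hsub, ?_⟩
  obtain ⟨hxa, hxb⟩ := hxI
  rcases ha with ha | rfl | rfl
  · have := far_of_crit a ⟨ha0, by linarith⟩ ha
    rw [abs_of_pos (by linarith)] at this
    exact (min_le_left _ _).trans (by linarith)
  · rcases hb with hb | rfl | rfl
    · have := far_of_crit b ⟨by linarith, hb1⟩ hb
      rw [abs_of_neg (by linarith)] at this
      exact (min_le_left _ _).trans (by linarith)
    · exact absurd hab (lt_irrefl 0)
    · exact (min_le_right _ _).trans (by norm_num)
  · linarith

theorem jumps_stmt13_general (f : ℝ → ℝ) (fn : ℕ → ℝ → ℝ)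
    (hfn : ∀ n, ContDiff ℝ 1 (fn n))
    (hC1 : TendstoUniformlyOn (fun n => deriv (fn n)) (deriv f) atTop (Set.Icc 0 1))
    (Pn : ℕ → Set (Set ℝ)) (hPn : ∀ n, IsNaturalPartition (fn n) (Pn n)) :
    ∀ m : ℕ, 0 < m → ∃ C : ℕ, ∀ n,
      (partAttains (fn n) (Pn n) m).Finite ∧
      Nat.card (partAttains (fn n) (Pn n) m) ≤ C := by
  intro m hm
  have hequi : UniformEquicontinuousOn (fun n => deriv (fn n)) (Icc 0 1) :=
    hC1.uniformEquicontinuousOn isCompact_Icc fun n =>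
      ((hfn n).continuous_deriv le_rfl).continuousOn
  obtain ⟨δ, hδ, hsep⟩ := hequi.exists_dist_lt (ε := 1 / m) (by positivity)
  refine ⟨⌊1 / min δ 1⌋₊, fun n => ?_⟩
  exact Set.finite_and_natCard_le_of_pairwiseDisjoint_Ioo
    ((hPn n).disjoint.subset fun I hI => hI.1) (lt_min hδ one_pos)
    fun I hI => (hPn n).exists_Ioo_of_mem_partAttains (hsep n) hI

/-- Let `(fₙ)` be `C^1` interval maps converging in the `C^1` topology to `f`, and `Pₙ` a
natural partition of `fₙ` for each `n`.  Then for every `m ≥ 1`, `sup_n #Pₙ(m) < ∞`. -/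
theorem jumps_stmt13 (f : ℝ → ℝ) (fn : ℕ → ℝ → ℝ)
    (hf : ContDiff ℝ 1 f) (hmaps : Set.MapsTo f (Set.Icc 0 1) (Set.Icc 0 1))
    (hfn : ∀ n, ContDiff ℝ 1 (fn n))
    (hmapsn : ∀ n, Set.MapsTo (fn n) (Set.Icc 0 1) (Set.Icc 0 1))
    (hC0 : TendstoUniformlyOn fn f atTop (Set.Icc 0 1))
    (hC1 : TendstoUniformlyOn (fun n => deriv (fn n)) (deriv f) atTop (Set.Icc 0 1))
    (Pn : ℕ → Set (Set ℝ)) (hPn : ∀ n, IsNaturalPartition (fn n) (Pn n)) :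
    ∀ m : ℕ, 0 < m → ∃ C : ℕ, ∀ n,
      (partAttains (fn n) (Pn n) m).Finite ∧
      Nat.card (partAttains (fn n) (Pn n) m) ≤ C :=
  jumps_stmt13_general f fn hfn hC1 Pn hPn
end
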